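/- Every regular ω-language F = L(A, T) satisfies the automatic Baire property: the symmetric difference L(A, T) Δ L(A, {Y : Y ⊆ Z for some Z ∈ T ∩ SCC_A^t}) is contained in L(A, 2^S \ SCC_A^t), where the former language L(A, {2^Z : Z ∈ T ∩ SCC_A^t}) is open and the latter is meagre in X^ω. -/

import Mathlib

open Set

/-- `w` is a finite prefix of the infinite word `ξ`. -/
def InfPrefix {X : Type*} (w : List X) (ξ : ℕ → X) : Prop :=
  ∀ i : Fin w.length, w.get i = ξ i.val

/-- The set of finite prefixes of elements of `F`. -/
def Pref {X : Type*} (F : Set (ℕ → X)) : Set (List X) :=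
  {w | ∃ ξ ∈ F, InfPrefix w ξ}

/-- Concatenation of a finite word in front of an infinite word. -/
def wordCat {X : Type*} (w : List X) (ξ : ℕ → X) : ℕ → X :=
  fun n => if h : n < w.length then w.get ⟨n, h⟩ else ξ (n - w.length)

/-- A deterministic automaton with initial state and transition function. -/
structure DetAuto (X S : Type*) where
  start : S
  step : S → X → S

/-- The extension of the transition function to finite words. -/
def DetAuto.run {X S : Type*} (A : DetAuto X S) (s : S) (w : List X) : S :=
  w.foldl A.step s

/-- The state reached after reading the first `n` letters of `ξ`. -/
def DetAuto.statesAt {X S : Type*} (A : DetAuto X S) (ξ : ℕ → X) (n : ℕ) : S :=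
  A.run A.start (List.ofFn fun i : Fin n => ξ i.val)

/-- `Inf(A, ξ)`: the set of states visited infinitely often on input `ξ`. -/
def AInf {X S : Type*} (A : DetAuto X S) (ξ : ℕ → X) : Set S :=
  {s | ∀ n : ℕ, ∃ m ≥ n, A.statesAt ξ m = s}

/-- Muller acceptance: `L(A, T)`. -/
def Lang {X S : Type*} (A : DetAuto X S) (T : Set (Set S)) : Set (ℕ → X) :=
  {ξ | AInf A ξ ∈ T}

/-- `LOOP_A`: the set of realizable infinity sets. -/
def Loops {X S : Type*} (A : DetAuto X S) : Set (Set S) :=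
  {Z | ∃ ξ : ℕ → X, AInf A ξ = Z}

/-- Strongly connected components: the loops maximal w.r.t. inclusion, i.e.
any other loop is contained in them or disjoint from them. -/
def IsSCC {X S : Type*} (A : DetAuto X S) (Z : Set S) : Prop :=
  Z ∈ Loops A ∧ ∀ Z' ∈ Loops A, Z' ⊆ Z ∨ Z' ∩ Z = ∅

/-- The relation `Z₁ ↦ Z₂`. -/
def ReachRel {X S : Type*} (A : DetAuto X S) (Z₁ Z₂ : Set S) : Prop :=
  Z₁ ≠ Z₂ ∧ ∃ s ∈ Z₁, ∃ w : List X, A.run s w ∈ Z₂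

/-- Terminal strongly connected components. -/
def IsTerminalSCC {X S : Type*} (A : DetAuto X S) (Z : Set S) : Prop :=
  IsSCC A Z ∧ ∀ Z' : Set S, IsSCC A Z' → Z ≠ Z' → ¬ ReachRel A Z Z'

/-!
From every state one reaches a recurrent state `u` (one reachable back from everything it
reaches), and the states reachable from such a `u` form a terminal SCC: they are the infinity
set of a word that ends by repeating a cycle through all of them. Conversely every terminal SCC
is of this form, hence closed under transitions, so `Inf(A, ξ)` lies in a terminal SCC `Z` as
soon as the run of `ξ` visits `Z`. This makes the approximating language a union of cylinders,
and when `Inf(A, ξ)` is itself a terminal SCC, `Inf(A, ξ) ∈ T` and `Inf(A, ξ) ⊆ Z ∈ T` agree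
because SCCs that meet coincide. For meagreness, the words that after time `n` run through a
whole terminal SCC form a dense open set (extend any prefix to a recurrent state and tour its
class), and a word lying in all of them has a terminal SCC as its infinity set.
-/

namespace DetAuto

variable {X S : Type*} (A : DetAuto X S)

def reach (s : S) : Set S := range (A.run s)

def IsRecurrent (s : S) : Prop := ∀ t ∈ A.reach s, s ∈ A.reach t

variable {A}

lemma run_append (s : S) (w v : List X) : A.run s (w ++ v) = A.run (A.run s w) v :=
  List.foldl_append

lemma run_mem_reach (s : S) (w : List X) : A.run s w ∈ A.reach s := ⟨w, rfl⟩

lemma mem_reach_self (s : S) : s ∈ A.reach s := run_mem_reach s []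

lemma reach_subset {s t : S} (h : t ∈ A.reach s) : A.reach t ⊆ A.reach s := by
  obtain ⟨w, rfl⟩ := h
  rintro _ ⟨v, rfl⟩
  exact ⟨w ++ v, run_append s w v⟩

lemma IsRecurrent.reach_eq {u t : S} (hu : A.IsRecurrent u) (ht : t ∈ A.reach u) :
    A.reach t = A.reach u :=
  (reach_subset ht).antisymm (reach_subset (hu t ht))

-- A state whose reach set is minimal among those reachable from `s` is recurrent.
lemma exists_isRecurrent_mem_reach [Finite S] (s : S) : ∃ u ∈ A.reach s, A.IsRecurrent u := by
  obtain ⟨u, hu, hmin⟩ :=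
    (A.reach s).toFinite.exists_minimalFor A.reach _ ⟨s, mem_reach_self s⟩
  exact ⟨u, hu, fun t ht => hmin (reach_subset hu ht) (reach_subset ht) (mem_reach_self u)⟩

lemma IsRecurrent.exists_cycle [Nonempty X] {u : S} (hu : A.IsRecurrent u) (l : List S)
    (hl : ∀ z ∈ l, z ∈ A.reach u) :
    ∃ c : List X, c ≠ [] ∧ A.run u c = u ∧
      ∀ z ∈ l, ∃ k ≤ c.length, A.run u (c.take k) = z := by
  induction l with
  | nil =>
    let x : X := Classical.arbitrary X
    obtain ⟨w, hw⟩ := hu _ (run_mem_reach u [x])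
    exact ⟨[x] ++ w, by simp, by rw [run_append, hw], by simp⟩
  | cons a l ih =>
    obtain ⟨c, hc, hcu, hvisit⟩ := ih fun z hz => hl z (List.mem_cons_of_mem a hz)
    obtain ⟨v, rfl⟩ := hl a List.mem_cons_self
    obtain ⟨w, hw⟩ := hu _ (run_mem_reach u v)
    refine ⟨c ++ v ++ w, by simp [hc], by rw [run_append, run_append, hcu, hw], ?_⟩
    rintro z (_ | ⟨_, hz⟩)
    · refine ⟨(c ++ v).length, by simp, ?_⟩
      rw [List.take_left, run_append, hcu]
    · obtain ⟨k, hk, rfl⟩ := hvisit z hz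
      refine ⟨k, by simp; omega, ?_⟩
      rw [List.append_assoc, List.take_append_of_le_length hk]

lemma run_ofFn_add (s : S) (ζ : ℕ → X) (m n : ℕ) :
    A.run s (List.ofFn fun i : Fin (m + n) => ζ i) =
      A.run (A.run s (List.ofFn fun i : Fin m => ζ i)) (List.ofFn fun i : Fin n => ζ (m + i)) := by
  rw [List.ofFn_add, run_append]
  rfl

lemma run_ofFn_of_periodic {s : S} {ζ : ℕ → X} {L : ℕ} (hζ : Function.Periodic ζ L)
    (hL : A.run s (List.ofFn fun i : Fin L => ζ i) = s) (j k : ℕ) :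
    A.run s (List.ofFn fun i : Fin (L * j + k) => ζ i) =
      A.run s (List.ofFn fun i : Fin k => ζ i) := by
  have hshift : ∀ i : ℕ, ζ (L + i) = ζ i := fun i => by rw [add_comm]; exact hζ i
  induction j with
  | zero => simp
  | succ j ih =>
    rw [show L * (j + 1) + k = L + (L * j + k) by ring, run_ofFn_add, hL]
    simpa only [hshift] using ih

lemma statesAt_add (ξ : ℕ → X) (m n : ℕ) :
    A.statesAt ξ (m + n) = A.run (A.statesAt ξ m) (List.ofFn fun i : Fin n => ξ (m + i)) :=
  run_ofFn_add _ ξ m n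

lemma statesAt_mem_reach (ξ : ℕ → X) {m n : ℕ} (h : m ≤ n) :
    A.statesAt ξ n ∈ A.reach (A.statesAt ξ m) := by
  obtain ⟨d, rfl⟩ := Nat.exists_eq_add_of_le h
  rw [statesAt_add]
  exact run_mem_reach _ _

lemma statesAt_mem_reach_start (ξ : ℕ → X) (n : ℕ) : A.statesAt ξ n ∈ A.reach A.start :=
  run_mem_reach _ _

lemma ofFn_wordCat (u : List X) (ζ : ℕ → X) (m : ℕ) :
    (List.ofFn fun i : Fin (u.length + m) => wordCat u ζ i) =
      u ++ List.ofFn fun i : Fin m => ζ i := by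
  refine List.ext_getElem (by simp) fun i h _ => ?_
  simp only [List.getElem_ofFn, wordCat, List.getElem_append]
  split_ifs <;> simp

lemma statesAt_wordCat (u : List X) (ζ : ℕ → X) (m : ℕ) :
    A.statesAt (wordCat u ζ) (u.length + m) =
      A.run (A.run A.start u) (List.ofFn fun i : Fin m => ζ i) := by
  rw [DetAuto.statesAt, ofFn_wordCat, run_append]

lemma AInf_nonempty [Finite S] (ξ : ℕ → X) : (AInf A ξ).Nonempty := by
  obtain ⟨s, hs⟩ := Finite.exists_infinite_fiber (A.statesAt ξ)
  refine ⟨s, fun n => ?_⟩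
  obtain ⟨m, hm, hnm⟩ := (Set.infinite_coe_iff.mp hs).exists_gt n
  exact ⟨m, hnm.le, hm⟩

lemma AInf_subset_of_forall_ge {ξ : ℕ → X} {Z : Set S} {N : ℕ}
    (h : ∀ m ≥ N, A.statesAt ξ m ∈ Z) : AInf A ξ ⊆ Z := fun s hs => by
  obtain ⟨m, hm, rfl⟩ := hs N
  exact h m hm

lemma mem_reach_of_mem_AInf {ξ : ℕ → X} {s t : S} (hs : s ∈ AInf A ξ) (ht : t ∈ AInf A ξ) :
    t ∈ A.reach s := by
  obtain ⟨m, -, rfl⟩ := hs 0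
  obtain ⟨n, hmn, rfl⟩ := ht m
  exact statesAt_mem_reach ξ hmn

-- The tail `ζ` repeats forever a cycle at `u` through every state of `A.reach u`.
lemma IsRecurrent.exists_AInf_wordCat_eq_reach [Finite S] [Nonempty X] {u : S}
    (hu : A.IsRecurrent u) (p : List X) (hp : A.run A.start p = u) :
    ∃ ζ : ℕ → X, AInf A (wordCat p ζ) = A.reach u := by
  obtain ⟨c, hc, hcu, hvisit⟩ := hu.exists_cycle (A.reach u).toFinite.toFinset.toList (by simp)
  have hL : 0 < c.length := List.length_pos_iff.mpr hc
  let ζ : ℕ → X := fun n => c.get ⟨n % c.length, Nat.mod_lt _ hL⟩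
  have hper : Function.Periodic ζ c.length := fun n => by simp [ζ]
  have hprefix : ∀ k ≤ c.length, (List.ofFn fun i : Fin k => ζ i) = c.take k := fun k hk =>
    List.ext_getElem (by simpa using hk) fun i hi _ => by
      simp [ζ, Nat.mod_eq_of_lt (show i < c.length by simp at hi; omega)]
  have hstates : ∀ m, A.statesAt (wordCat p ζ) (p.length + m) =
      A.run u (List.ofFn fun i : Fin m => ζ i) := fun m => by
    rw [statesAt_wordCat, hp]
  refine ⟨ζ, (AInf_subset_of_forall_ge (N := p.length) fun m hm => ?_).antisymm
    fun z hz n => ?_⟩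
  · obtain ⟨d, rfl⟩ := Nat.exists_eq_add_of_le hm
    rw [hstates]
    exact run_mem_reach _ _
  · obtain ⟨k, hk, rfl⟩ := hvisit z (by simpa using hz)
    refine ⟨p.length + (c.length * n + k), by nlinarith, ?_⟩
    have hcycle : A.run u (List.ofFn fun i : Fin c.length => ζ i) = u := by
      rw [hprefix _ le_rfl, List.take_length, hcu]
    rw [hstates, run_ofFn_of_periodic hper hcycle, hprefix k hk]

lemma _root_.IsSCC.nonempty [Finite S] {Z : Set S} (hZ : IsSCC A Z) : Z.Nonempty := by
  obtain ⟨ξ, rfl⟩ := hZ.1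
  exact AInf_nonempty ξ

lemma _root_.IsSCC.eq_of_inter_nonempty {Z₁ Z₂ : Set S} (h₁ : IsSCC A Z₁) (h₂ : IsSCC A Z₂)
    (h : (Z₁ ∩ Z₂).Nonempty) : Z₁ = Z₂ :=
  ((h₂.2 Z₁ h₁.1).resolve_right h.ne_empty).antisymm
    ((h₁.2 Z₂ h₂.1).resolve_right (inter_comm Z₁ Z₂ ▸ h).ne_empty)

lemma IsRecurrent.isTerminalSCC_reach [Finite S] [Nonempty X] {u : S} (hu : A.IsRecurrent u)
    (hstart : u ∈ A.reach A.start) : IsTerminalSCC A (A.reach u) := by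
  have hscc : IsSCC A (A.reach u) := by
    obtain ⟨p, hp⟩ := hstart
    obtain ⟨ζ, hζ⟩ := hu.exists_AInf_wordCat_eq_reach p hp
    refine ⟨⟨_, hζ⟩, fun Z hZ => ?_⟩
    rcases (Z ∩ A.reach u).eq_empty_or_nonempty with h | ⟨t, htZ, htu⟩
    · exact Or.inr h
    · obtain ⟨ξ, rfl⟩ := hZ
      exact Or.inl fun z hz => reach_subset htu (mem_reach_of_mem_AInf htZ hz)
  refine ⟨hscc, fun Z hZ hne ⟨_, s, hs, w, hw⟩ => hne ?_⟩
  exact hscc.eq_of_inter_nonempty hZ ⟨_, reach_subset hs (run_mem_reach s w), hw⟩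

lemma _root_.IsTerminalSCC.eq_reach [Finite S] {Z : Set S} (hZ : IsTerminalSCC A Z) {s : S}
    (hs : s ∈ Z) : Z = A.reach s := by
  obtain ⟨u, hsu, hu⟩ := A.exists_isRecurrent_mem_reach s
  have hZu : Z = A.reach u := by
    obtain ⟨ξ, rfl⟩ := hZ.1.1
    have : Nonempty X := ⟨ξ 0⟩
    obtain ⟨m, -, rfl⟩ := hs 0
    have hstart := reach_subset (statesAt_mem_reach_start ξ m) hsu
    by_contra hne
    obtain ⟨w, rfl⟩ := hsu
    exact hZ.2 _ (hu.isTerminalSCC_reach hstart).1 hne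
      ⟨hne, _, fun n => hs n, w, mem_reach_self _⟩
  exact hZu.trans (hu.reach_eq (hZu ▸ hs)).symm

lemma _root_.IsTerminalSCC.AInf_subset_iff [Finite S] {Z : Set S} (hZ : IsTerminalSCC A Z)
    (ξ : ℕ → X) : AInf A ξ ⊆ Z ↔ ∃ k, A.statesAt ξ k ∈ Z := by
  refine ⟨fun h => ?_, fun ⟨k, hk⟩ => AInf_subset_of_forall_ge (N := k) fun m hm => ?_⟩
  · obtain ⟨s, hs⟩ := AInf_nonempty (A := A) ξ
    obtain ⟨k, -, hk⟩ := hs 0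
    exact ⟨k, hk ▸ h hs⟩
  · rw [hZ.eq_reach hk]
    exact statesAt_mem_reach ξ hm

lemma lang_iff_of_isTerminalSCC_AInf [Finite S] (T : Set (Set S)) {ξ : ℕ → X}
    (hξ : IsTerminalSCC A (AInf A ξ)) :
    ξ ∈ Lang A T ↔ ξ ∈ Lang A {Y : Set S | ∃ Z ∈ T, IsTerminalSCC A Z ∧ Y ⊆ Z} := by
  refine ⟨fun h => ⟨_, h, hξ, subset_rfl⟩, fun ⟨Z, hZT, hZ, hsub⟩ => ?_⟩
  have hinter : (AInf A ξ ∩ Z).Nonempty := by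
    obtain ⟨s, hs⟩ := AInf_nonempty (A := A) ξ
    exact ⟨s, hs, hsub hs⟩
  rwa [Lang, mem_ofPred_eq, hξ.1.eq_of_inter_nonempty hZ.1 hinter]

variable (A)

def coversTerminalSCCFrom (n : ℕ) : Set (ℕ → X) :=
  {ξ | ∃ Z, IsTerminalSCC A Z ∧ ∀ z ∈ Z, ∃ k ≥ n, A.statesAt ξ k = z}

variable {A}

lemma isTerminalSCC_AInf_of_forall_mem_coversTerminalSCCFrom [Finite S] {ξ : ℕ → X}
    (h : ∀ n, ξ ∈ A.coversTerminalSCCFrom n) : IsTerminalSCC A (AInf A ξ) := by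
  have hsub : ∀ {n Z}, IsTerminalSCC A Z → (∀ z ∈ Z, ∃ k ≥ n, A.statesAt ξ k = z) →
      AInf A ξ ⊆ Z := fun hZ hvisit => by
    obtain ⟨z, hz⟩ := hZ.1.nonempty
    obtain ⟨k, -, hk⟩ := hvisit z hz
    exact (hZ.AInf_subset_iff ξ).2 ⟨k, hk ▸ hz⟩
  obtain ⟨Z, hZ, hvisit⟩ := h 0
  obtain ⟨s, hs⟩ := AInf_nonempty (A := A) ξ
  suffices Z ⊆ AInf A ξ from (hsub hZ hvisit).antisymm this ▸ hZ
  intro z hz n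
  obtain ⟨Z', hZ', hvisit'⟩ := h n
  have hZZ' : Z = Z' := hZ.1.eq_of_inter_nonempty hZ'.1 ⟨s, hsub hZ hvisit hs, hsub hZ' hvisit' hs⟩
  exact hvisit' z (hZZ' ▸ hz)

section Topology

variable [TopologicalSpace X] [DiscreteTopology X]

lemma isOpen_setOf_statesAt_mem (n : ℕ) (P : Set S) :
    IsOpen {ξ : ℕ → X | A.statesAt ξ n ∈ P} := by
  show IsOpen ((fun (ξ : ℕ → X) (i : Fin n) => ξ i) ⁻¹' {g | A.run A.start (List.ofFn g) ∈ P})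
  exact (continuous_pi fun i => continuous_apply _).isOpen_preimage _ (isOpen_discrete _)

lemma isOpen_lang_subset_isTerminalSCC [Finite S] (T : Set (Set S)) :
    IsOpen (Lang A {Y : Set S | ∃ Z ∈ T, IsTerminalSCC A Z ∧ Y ⊆ Z}) := by
  have : Lang A {Y : Set S | ∃ Z ∈ T, IsTerminalSCC A Z ∧ Y ⊆ Z} =
      ⋃ Z ∈ {Z | Z ∈ T ∧ IsTerminalSCC A Z}, ⋃ k, {ξ | A.statesAt ξ k ∈ Z} := by
    ext ξ
    simp only [Lang, mem_ofPred_eq, mem_iUnion, exists_prop, and_assoc]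
    exact exists_congr fun Z => and_congr_right fun _ => and_congr_right fun hZ =>
      hZ.AInf_subset_iff ξ
  rw [this]
  exact isOpen_biUnion fun Z _ => isOpen_iUnion fun k => isOpen_setOf_statesAt_mem k Z

lemma isOpen_coversTerminalSCCFrom [Finite S] (n : ℕ) : IsOpen (A.coversTerminalSCCFrom n) := by
  have : A.coversTerminalSCCFrom n =
      ⋃ Z ∈ {Z | IsTerminalSCC A Z}, ⋂ z ∈ Z, ⋃ k ≥ n, {ξ | A.statesAt ξ k ∈ ({z} : Set S)} := by
    ext ξ
    simp [coversTerminalSCCFrom]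
  rw [this]
  exact isOpen_biUnion fun Z _ => Z.toFinite.isOpen_biInter fun z _ =>
    isOpen_biUnion fun k _ => isOpen_setOf_statesAt_mem k {z}

lemma dense_coversTerminalSCCFrom [Finite S] (n : ℕ) : Dense (A.coversTerminalSCCFrom n) := by
  refine (PiNat.isTopologicalBasis_cylinders fun _ : ℕ => X).dense_iff.mpr ?_
  rintro _ ⟨ξ, N, rfl⟩ -
  have : Nonempty X := ⟨ξ 0⟩
  obtain ⟨u, ⟨w, hw⟩, hu⟩ := A.exists_isRecurrent_mem_reach (A.statesAt ξ N)
  let p := (List.ofFn fun i : Fin N => ξ i) ++ w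
  have hp : A.run A.start p = u := by rw [run_append]; exact hw
  obtain ⟨ζ, hζ⟩ := hu.exists_AInf_wordCat_eq_reach p hp
  refine ⟨wordCat p ζ, fun i hi => ?_, A.reach u, hu.isTerminalSCC_reach ⟨p, hp⟩,
    fun z hz => (hζ.symm ▸ hz : z ∈ AInf A (wordCat p ζ)) n⟩
  simp [wordCat, p, hi, List.getElem_append_left]
  omega

lemma isMeagre_lang_not_isTerminalSCC [Finite S] :
    IsMeagre (Lang A {Y : Set S | ¬ IsTerminalSCC A Y}) := by
  refine Filter.mem_of_superset (countable_iInter_mem.mpr fun n =>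
    residual_of_dense_open (isOpen_coversTerminalSCCFrom (A := A) n)
      (dense_coversTerminalSCCFrom n)) ?_
  exact fun ξ hξ hnot => hnot (isTerminalSCC_AInf_of_forall_mem_coversTerminalSCCFrom
    (mem_iInter.mp hξ))

end Topology

end DetAuto

theorem automatic_baire_general {X S : Type*} [Fintype S]
    [TopologicalSpace X] [DiscreteTopology X]
    (A : DetAuto X S) (T : Set (Set S)) :
    symmDiff (Lang A T)
        (Lang A {Y : Set S | ∃ Z ∈ T, IsTerminalSCC A Z ∧ Y ⊆ Z}) ⊆
      Lang A {Y : Set S | ¬ IsTerminalSCC A Y} ∧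
    IsOpen (Lang A {Y : Set S | ∃ Z ∈ T, IsTerminalSCC A Z ∧ Y ⊆ Z}) ∧
    IsMeagre (Lang A {Y : Set S | ¬ IsTerminalSCC A Y}) := by
  refine ⟨fun ξ hξ hterm => ?_, DetAuto.isOpen_lang_subset_isTerminalSCC T,
    DetAuto.isMeagre_lang_not_isTerminalSCC⟩
  rcases mem_symmDiff.mp hξ with ⟨h, hnot⟩ | ⟨h, hnot⟩
  · exact hnot ((DetAuto.lang_iff_of_isTerminalSCC_AInf T hterm).mp h)
  · exact hnot ((DetAuto.lang_iff_of_isTerminalSCC_AInf T hterm).mpr h)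

/-- The automatic Baire property for regular ω-languages:
L(A,T) Δ L(A, {Y : Y ⊆ Z for some terminal SCC Z ∈ T}) ⊆
L(A, {Y : Y is not a terminal SCC}), the former approximating language being
open and the latter meagre. -/
theorem automatic_baire {X S : Type*} [Fintype X] [Fintype S]
    [TopologicalSpace X] [DiscreteTopology X]
    (A : DetAuto X S) (T : Set (Set S)) :
    symmDiff (Lang A T)
        (Lang A {Y : Set S | ∃ Z ∈ T, IsTerminalSCC A Z ∧ Y ⊆ Z}) ⊆
      Lang A {Y : Set S | ¬ IsTerminalSCC A Y} ∧
    IsOpen (Lang A {Y : Set S | ∃ Z ∈ T, IsTerminalSCC A Z ∧ Y ⊆ Z}) ∧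
    IsMeagre (Lang A {Y : Set S | ¬ IsTerminalSCC A Y}) :=
  automatic_baire_general A T
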